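/- arXiv:1403.3950 — 5 statements merged into one kernel-verified Lean document; each statement's English description precedes it below -/
import Mathlib

section
/- Suppose 𝒳 is an open subset of ℝ^d which contains a bounded rectangle J which contains K_{2D} ∖ K_D, where K_{2D} ∖ K_D has positive Lebesgue measure, and suppose there are δ > 0 and ε > 0 such that P(x, dy) ≥ ε Leb(dy) whenever x, y ∈ J with |y − x| < δ, where Leb is Lebesgue measure on ℝ^d. Then assumption (A3) holds with ν* = Uniform(K_{2D} ∖ K_D): there are ε' > 0 and n₀ ∈ ℕ such that P^{n₀}(x, A) ≥ ε' ν*(A) for all x ∈ K_{2D} ∖ K_D and all Borel sets A. -/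
open MeasureTheory ProbabilityTheory Filter Metric Set
open scoped ENNReal Topology

noncomputable def iterK {X : Type*} [MeasurableSpace X] (P : Kernel X X) : ℕ → Kernel X X
  | 0 => Kernel.deterministic id measurable_id
  | n + 1 => P.comp (iterK P n)

noncomputable def tvDist {X : Type*} [MeasurableSpace X] (μ ν : Measure X) : ℝ≥0∞ :=
  ⨆ A : {s : Set X // MeasurableSet s}, (μ A.1 - ν A.1) ⊔ (ν A.1 - μ A.1)

def HarrisErgodic {X : Type*} [MeasurableSpace X] (P : Kernel X X) (π : Measure X) : Prop :=
  (∀ A : Set X, MeasurableSet A → ∫⁻ x, P x A ∂π = π A) ∧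
    ∀ x, Tendsto (fun n => tvDist (iterK P n x) π) atTop (𝓝 0)

def IsAdversarial {X Ω : Type*} [MeasurableSpace X] [MetricSpace X] [MeasurableSpace Ω]
    (P : Kernel X X) (K : Set X) (D : ℝ) (x₀ : X) (μ : Measure Ω) (Xp : ℕ → Ω → X) : Prop :=
  (∀ n, Measurable (Xp n)) ∧ (∀ ω, Xp 0 ω = x₀) ∧
  (∀ (n : ℕ) (A : Set X), MeasurableSet A → ∀ E : Set Ω,
      MeasurableSet[MeasurableSpace.comap (fun ω (i : Fin (n + 1)) => Xp i ω) inferInstance] E →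
      μ (E ∩ {ω | Xp n ω ∉ K} ∩ {ω | Xp (n + 1) ω ∈ A}) =
        ∫⁻ ω in E ∩ {ω | Xp n ω ∉ K}, P (Xp n ω) A ∂μ) ∧
  (∀ n : ℕ, μ ({ω | Xp n ω ∈ K} ∩ {ω | Xp (n + 1) ω ∉ cthickening D K}) = 0)

def BoundedInProb {X Ω : Type*} [MeasurableSpace Ω] [MetricSpace X]
    (μ : Measure Ω) (Xp : ℕ → Ω → X) (o : X) : Prop :=
  Tendsto (fun L : ℝ => ⨆ n, μ {ω | L < dist (Xp n ω) o}) atTop (𝓝 0)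

def IsMarkovReal {X Ω : Type*} [MeasurableSpace X] [MeasurableSpace Ω]
    (P : Kernel X X) (ν : Measure X) (μ : Measure Ω) (Y : ℕ → Ω → X) : Prop :=
  (∀ n, Measurable (Y n)) ∧ μ.map (Y 0) = ν ∧
  (∀ (n : ℕ) (A : Set X), MeasurableSet A → ∀ E : Set Ω,
      MeasurableSet[MeasurableSpace.comap (fun ω (i : Fin (n + 1)) => Y i ω) inferInstance] E →
      μ (E ∩ {ω | Y (n + 1) ω ∈ A}) = ∫⁻ ω in E, P (Y n ω) A ∂μ)

noncomputable def hitTime {X Ω : Type*} (Y : ℕ → Ω → X) (B : Set X) (ω : Ω) : ℝ≥0∞ :=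
  ⨅ (n : ℕ) (_ : 1 ≤ n ∧ Y n ω ∈ B), (n : ℝ≥0∞)

noncomputable def survMeas {X : Type*} [MeasurableSpace X] (P : Kernel X X) (B : Set X)
    (ν : Measure X) : ℕ → Measure X
  | 0 => ν
  | n + 1 => (((survMeas P B ν n).bind (fun x => P x)).restrict Bᶜ)

noncomputable def expKappaHit {X : Type*} [MeasurableSpace X] (P : Kernel X X) (C : Set X)
    (κ : ℝ≥0∞) (x : X) : ℝ≥0∞ :=
  (∑' n : ℕ, κ ^ (n + 1) * ((survMeas P C (Measure.dirac x) n).bind (fun z => P z)) C)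
    + ⊤ * (1 - ∑' n : ℕ, ((survMeas P C (Measure.dirac x) n).bind (fun z => P z)) C)

def IsSmallSet {X : Type*} [MeasurableSpace X] (P : Kernel X X) (C : Set X) : Prop :=
  ∃ ν : Measure X, IsProbabilityMeasure ν ∧ ∃ ε : ℝ≥0∞, 0 < ε ∧ ∃ n₀ : ℕ, 1 ≤ n₀ ∧
    ∀ x ∈ C, ∀ A : Set X, MeasurableSet A → ε * ν A ≤ iterK P n₀ x A

def GeomErgodic {X : Type*} [MeasurableSpace X] (P : Kernel X X) (π : Measure X) : Prop :=
  ∃ ρ : ℝ≥0∞, ρ < 1 ∧ ∃ ξ : X → ℝ≥0∞, Measurable ξ ∧ (∀ x, 1 ≤ ξ x) ∧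
    (∀ᵐ x ∂π, ξ x < ⊤) ∧ ∀ (n : ℕ) (x : X), tvDist (iterK P n x) π ≤ ξ x * ρ ^ n

/-!
On the rectangle `J`, one step of `P` dominates `ε` times Lebesgue measure on `J ∩ B(x, δ)`.
Inductively, `P^{n+1}(x, ·)` dominates a positive multiple of Lebesgue measure on
`J ∩ B(x, δ + nδ/2)`: by Fubini, the mass the next step carries from `J ∩ B(x, r)` to a point `z`
is at least `ε` times the volume of the lens `J ∩ B(x, r) ∩ B(z, δ)`, and for a bounded convex
set with nonempty interior these lenses have volume bounded below whenever
`|x - z| < r + δ/2`. As `J` is bounded, finitely many steps cover all of `J ⊇ K_{2D} ∖ K_D`,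
and normalising the Lebesgue measure of `K_{2D} ∖ K_D` gives (A3).
-/

open AffineMap Bornology

section Chaining

variable {X : Type*} [PseudoMetricSpace X] [MeasurableSpace X] [OpensMeasurableSpace X]
  [SecondCountableTopology X] {μ : Measure X}

theorem lintegral_measure_inter_ball_comm [SFinite μ] (S T : Set X) (δ : ℝ) :
    ∫⁻ y in T, μ (S ∩ ball y δ) ∂μ = ∫⁻ z in S, μ (T ∩ ball z δ) ∂μ := by
  have hW : MeasurableSet {p : X × X | dist p.1 p.2 < δ} :=
    measurableSet_lt measurable_dist measurable_const
  have hslice : ∀ y : X, Prod.mk y ⁻¹' {p : X × X | dist p.1 p.2 < δ} = ball y δ := fun y => by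
    ext z; simp [dist_comm]
  calc ∫⁻ y in T, μ (S ∩ ball y δ) ∂μ
      = (μ.restrict T).prod (μ.restrict S) {p | dist p.1 p.2 < δ} := by
        simp only [Measure.prod_apply hW, hslice, Measure.restrict_apply measurableSet_ball,
          inter_comm]
    _ = ∫⁻ z in S, μ (T ∩ ball z δ) ∂μ := by
        simp only [Measure.prod_apply_symm hW]
        exact lintegral_congr fun z => by
          rw [← inter_comm, ← Measure.restrict_apply measurableSet_ball]; rfl

theorem smul_restrict_ball_le_bind [SFinite μ] (P : Kernel X X) {J : Set X} (hJ : MeasurableSet J)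
    {x : X} {δ r : ℝ} {ε M C : ℝ≥0∞} (hP : ∀ y ∈ J, ε • μ.restrict (J ∩ ball y δ) ≤ P y)
    (hM : ∀ z ∈ J, dist x z < r + δ / 2 → M ≤ μ (J ∩ ball x r ∩ ball z δ))
    {ν : Measure X} (hν : C • μ.restrict (J ∩ ball x r) ≤ ν) :
    (C * (ε * M)) • μ.restrict (J ∩ ball x (r + δ / 2)) ≤ ν.bind P := by
  refine Measure.le_iff.2 fun A hA => ?_
  set T := J ∩ ball x r
  have hPA : ∀ y ∈ T, ε * μ (A ∩ J ∩ ball y δ) ≤ P y A := fun y hy => by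
    simpa [Measure.restrict_apply hA, inter_assoc] using Measure.le_iff.1 (hP y hy.1) A hA
  have hMA : ∀ z ∈ A ∩ J ∩ ball x (r + δ / 2), M ≤ μ (T ∩ ball z δ) := fun z hz =>
    hM z hz.1.2 (by simpa [dist_comm] using hz.2)
  rw [Measure.smul_apply, Measure.restrict_apply hA, Measure.bind_apply hA P.aemeasurable,
    smul_eq_mul, ← inter_assoc]
  calc C * (ε * M) * μ (A ∩ J ∩ ball x (r + δ / 2))
      = C * ε * ∫⁻ _ in A ∩ J ∩ ball x (r + δ / 2), M ∂μ := by rw [setLIntegral_const]; ring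
    _ ≤ C * ε * ∫⁻ z in A ∩ J, μ (T ∩ ball z δ) ∂μ := by
        gcongr C * ε * ?_
        exact (setLIntegral_mono' ((hA.inter hJ).inter measurableSet_ball) hMA).trans
          (lintegral_mono_set inter_subset_left)
    _ ≤ C * ∫⁻ y in T, ε * μ (A ∩ J ∩ ball y δ) ∂μ := by
        rw [← lintegral_measure_inter_ball_comm, mul_assoc]
        gcongr C * ?_
        exact lintegral_const_mul_le _ _
    _ ≤ C * ∫⁻ y in T, P y A ∂μ := by
        gcongr C * ?_
        exact setLIntegral_mono (P.measurable_coe hA) hPA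
    _ = ∫⁻ y, P y A ∂(C • μ.restrict T) := by rw [lintegral_smul_measure, smul_eq_mul]
    _ ≤ ∫⁻ y, P y A ∂ν := lintegral_mono' hν le_rfl

theorem smul_restrict_ball_le_iterK [SFinite μ] (P : Kernel X X) {J : Set X}
    (hJ : MeasurableSet J) {δ : ℝ} {ε M : ℝ≥0∞}
    (hP : ∀ y ∈ J, ε • μ.restrict (J ∩ ball y δ) ≤ P y)
    (hM : ∀ x ∈ J, ∀ z ∈ J, ∀ r, δ ≤ r → dist x z < r + δ / 2 → M ≤ μ (J ∩ ball x r ∩ ball z δ))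
    (hδ : 0 ≤ δ) (n : ℕ) {x : X} (hx : x ∈ J) :
    (ε * (ε * M) ^ n) • μ.restrict (J ∩ ball x (δ + n * (δ / 2))) ≤ iterK P (n + 1) x := by
  induction n with
  | zero =>
    simpa [iterK, Kernel.comp_apply, Kernel.deterministic_apply,
      Measure.dirac_bind P.measurable] using hP x hx
  | succ n ih =>
    have hr : δ ≤ δ + n * (δ / 2) := le_add_of_nonneg_right (by positivity)
    have := smul_restrict_ball_le_bind P hJ hP (hM x hx · · _ hr) ih
    rw [iterK, Kernel.comp_apply, pow_succ, ← mul_assoc, Nat.cast_succ, add_one_mul, ← add_assoc]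
    exact this

end Chaining

section Convex

variable {E : Type*} [NormedAddCommGroup E] [NormedSpace ℝ E]

theorem exists_mem_segment_ball_subset_ball_inter_ball {x z : E} {δ r : ℝ} (hδ : 0 < δ)
    (hr : δ ≤ r) (hxz : dist x z < r + δ / 2) :
    ∃ y ∈ segment ℝ x z, ball y (δ / 4) ⊆ ball x r ∩ ball z δ := by
  by_cases h : dist x z ≤ 3 * δ / 4
  · exact ⟨x, left_mem_segment ℝ x z, subset_inter (ball_subset_ball (by linarith))
      (ball_subset_ball' (by linarith))⟩
  replace h := not_le.1 h
  have hpos : 0 < dist x z := by linarith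
  set t := 3 * δ / 4 / dist x z
  have ht0 : 0 ≤ t := by positivity
  have ht1 : t ≤ 1 := (div_le_one hpos).2 h.le
  have htd : t * dist x z = 3 * δ / 4 := div_mul_cancel₀ _ hpos.ne'
  refine ⟨lineMap z x t, (convex_segment x z).lineMap_mem (right_mem_segment ℝ x z)
    (left_mem_segment ℝ x z) ⟨ht0, ht1⟩, subset_inter (ball_subset_ball' ?_) (ball_subset_ball' ?_)⟩
  · rw [dist_lineMap_right, Real.norm_of_nonneg (by linarith), dist_comm, sub_mul, one_mul, htd]
    linarith
  · rw [dist_lineMap_left, Real.norm_of_nonneg ht0, dist_comm, htd]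
    linarith

theorem Convex.ball_lineMap_subset {J : Set E} (hJ : Convex ℝ J) {y m : E} {ρ t : ℝ} (hy : y ∈ J)
    (hm : ball m ρ ⊆ J) (ht0 : 0 < t) (ht1 : t ≤ 1) : ball (lineMap y m t) (t * ρ) ⊆ J := by
  intro w hw
  have hw' : m + t⁻¹ • (w - lineMap y m t) ∈ ball m ρ := by
    rw [mem_ball, dist_eq_norm, add_sub_cancel_left, norm_smul, Real.norm_of_nonneg (by positivity),
      inv_mul_lt_iff₀ ht0, ← dist_eq_norm]
    exact hw
  convert hJ.lineMap_mem hy (hm hw') ⟨ht0.le, ht1⟩ using 1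
  simp only [lineMap_apply_module']
  rw [add_sub_right_comm, smul_add, smul_smul, mul_inv_cancel₀ ht0.ne', one_smul]
  abel

variable [MeasurableSpace E] [BorelSpace E] (μ : Measure E) [μ.IsAddHaarMeasure]

theorem Convex.exists_pos_le_measure_inter_ball_inter_ball {J : Set E} (hJ : Convex ℝ J)
    (hJb : IsBounded J) (hJi : (interior J).Nonempty) {δ : ℝ} (hδ : 0 < δ) :
    ∃ M > 0, ∀ x ∈ J, ∀ z ∈ J, ∀ r, δ ≤ r → dist x z < r + δ / 2 →
      M ≤ μ (J ∩ ball x r ∩ ball z δ) := by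
  obtain ⟨m, hm⟩ := hJi
  obtain ⟨ρ, hρ, hmρ⟩ := Metric.isOpen_iff.1 isOpen_interior m hm
  obtain ⟨R, hR⟩ := hJb.subset_closedBall m
  have hR0 : 0 ≤ R := dist_nonneg.trans (hR (interior_subset hm))
  set t := δ / (4 * (R + ρ) + δ)
  have ht0 : 0 < t := by positivity
  have ht1 : t ≤ 1 := (div_le_one (by positivity)).2 (by linarith)
  have htR : t * (ρ + R) ≤ δ / 4 := by
    rw [div_mul_eq_mul_div, div_le_iff₀ (by positivity)]
    nlinarith
  refine ⟨μ (ball 0 (t * ρ)), measure_ball_pos μ 0 (by positivity),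
    fun x hx z hz r hr hxz => ?_⟩
  obtain ⟨y, hy, hyball⟩ := exists_mem_segment_ball_subset_ball_inter_ball hδ hr hxz
  have hyJ := hJ.segment_subset hx hz hy
  have hsub : ball (lineMap y m t) (t * ρ) ⊆ J ∩ ball x r ∩ ball z δ := by
    intro w hw
    have hwy : w ∈ ball y (δ / 4) := by
      refine ball_subset_ball' ?_ hw
      rw [dist_lineMap_left, Real.norm_of_nonneg ht0.le]
      have : dist y m ≤ R := hR hyJ
      nlinarith
    exact ⟨⟨hJ.ball_lineMap_subset hyJ (hmρ.trans interior_subset) ht0 ht1 hw,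
      (hyball hwy).1⟩, (hyball hwy).2⟩
  rw [← Measure.addHaar_ball_center μ (lineMap y m t)]
  exact measure_mono hsub

theorem Convex.exists_smul_restrict_le_iterK [FiniteDimensional ℝ E] (P : Kernel E E) {J : Set E}
    (hJ : Convex ℝ J) (hJo : IsOpen J) (hJb : IsBounded J) (hJne : J.Nonempty) {δ : ℝ}
    (hδ : 0 < δ) {ε : ℝ≥0∞} (hε : ε ≠ 0) (hP : ∀ x ∈ J, ε • μ.restrict (J ∩ ball x δ) ≤ P x) :
    ∃ c : ℝ≥0∞, 0 < c ∧ ∃ n : ℕ, ∀ x ∈ J, c • μ.restrict J ≤ iterK P (n + 1) x := by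
  obtain ⟨M, hM0, hM⟩ :=
    hJ.exists_pos_le_measure_inter_ball_inter_ball μ hJb (by rwa [hJo.interior_eq]) hδ
  obtain ⟨C, hC⟩ := isBounded_iff.1 hJb
  obtain ⟨n, hn⟩ := exists_nat_gt (C / (δ / 2))
  refine ⟨ε * (ε * M) ^ n, ENNReal.mul_pos hε (pow_ne_zero _ (mul_ne_zero hε hM0.ne')), n,
    fun x hx => ?_⟩
  have hJball : J ∩ ball x (δ + n * (δ / 2)) = J := by
    refine inter_eq_left.2 fun z hz => mem_ball.2 ?_
    have := (div_lt_iff₀ (by positivity)).1 hn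
    linarith [hC hz hx]
  simpa [hJball] using smul_restrict_ball_le_iterK P hJo.measurableSet hP hM hδ.le n hx

end Convex

theorem MeasureTheory.Measure.smul_restrict_le_of_forall_subset {X : Type*} [MeasurableSpace X]
    {μ ν : Measure X} {s : Set X} (hs : MeasurableSet s) {c : ℝ≥0∞}
    (h : ∀ A, MeasurableSet A → A ⊆ s → c * μ A ≤ ν A) : c • μ.restrict s ≤ ν :=
  Measure.le_iff.2 fun A hA => by
    rw [Measure.smul_apply, Measure.restrict_apply hA, smul_eq_mul]
    exact (h _ (hA.inter hs) inter_subset_right).trans (measure_mono inter_subset_left)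

section Box

variable {ι : Type*} (a b : ι → ℝ)

theorem EuclideanSpace.setOf_forall_mem_Ioo :
    {x : EuclideanSpace ℝ ι | ∀ i, x i ∈ Ioo (a i) (b i)} =
      WithLp.ofLp ⁻¹' univ.pi fun i => Ioo (a i) (b i) := by
  ext x; simp

theorem EuclideanSpace.isOpen_setOf_forall_mem_Ioo [Finite ι] :
    IsOpen {x : EuclideanSpace ℝ ι | ∀ i, x i ∈ Ioo (a i) (b i)} := by
  rw [EuclideanSpace.setOf_forall_mem_Ioo]
  exact (isOpen_set_pi finite_univ fun i _ => isOpen_Ioo).preimage (PiLp.continuous_ofLp 2 _)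

theorem EuclideanSpace.isBounded_setOf_forall_mem_Ioo [Fintype ι] :
    IsBounded {x : EuclideanSpace ℝ ι | ∀ i, x i ∈ Ioo (a i) (b i)} := by
  rw [EuclideanSpace.setOf_forall_mem_Ioo]
  exact (PiLp.antilipschitzWith_ofLp 2 _).isBounded_preimage
    (IsBounded.pi fun i => Metric.isBounded_Ioo (a i) (b i))

theorem EuclideanSpace.convex_setOf_forall_mem_Ioo :
    Convex ℝ {x : EuclideanSpace ℝ ι | ∀ i, x i ∈ Ioo (a i) (b i)} := by
  intro x hx y hy s t hs ht hst i
  simpa using convex_Ioo (a i) (b i) (hx i) (hy i) hs ht hst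

end Box

theorem A3_of_epsilon_delta_general
    (d : ℕ)
    (P : Kernel (EuclideanSpace ℝ (Fin d)) (EuclideanSpace ℝ (Fin d)))
    (D : ℝ)
    (K : Set (EuclideanSpace ℝ (Fin d)))
    -- the bounded rectangle J
    (a b : Fin d → ℝ)
    (J : Set (EuclideanSpace ℝ (Fin d)))
    (hJ : J = {x | ∀ i, x i ∈ Ioo (a i) (b i)})
    (hSJ : cthickening (2 * D) K \ cthickening D K ⊆ J)
    -- K_{2D} ∖ K_D has positive Lebesgue measure
    (hSpos : 0 < volume (cthickening (2 * D) K \ cthickening D K))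
    -- the ε-δ minorization condition (7)
    (δ ε : ℝ) (hδ : 0 < δ) (hε : 0 < ε)
    (hmin : ∀ x ∈ J, ∀ A : Set (EuclideanSpace ℝ (Fin d)), MeasurableSet A →
        A ⊆ J ∩ ball x δ → ENNReal.ofReal ε * volume A ≤ P x A) :
    -- (A3) with ν* = Uniform(K_{2D} ∖ K_D)
    ∃ ε' : ℝ≥0∞, 0 < ε' ∧ ∃ n₀ : ℕ, 1 ≤ n₀ ∧
      ∀ x ∈ cthickening (2 * D) K \ cthickening D K,
        ∀ A : Set (EuclideanSpace ℝ (Fin d)), MeasurableSet A →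
          ε' * ((volume (cthickening (2 * D) K \ cthickening D K))⁻¹ *
              volume (A ∩ (cthickening (2 * D) K \ cthickening D K))) ≤
            iterK P n₀ x A := by
  set S := cthickening (2 * D) K \ cthickening D K
  have hJo : IsOpen J := hJ ▸ EuclideanSpace.isOpen_setOf_forall_mem_Ioo a b
  have hJb : IsBounded J := hJ ▸ EuclideanSpace.isBounded_setOf_forall_mem_Ioo a b
  have hJc : Convex ℝ J := hJ ▸ EuclideanSpace.convex_setOf_forall_mem_Ioo a b
  obtain ⟨c, hc, n, hn⟩ := hJc.exists_smul_restrict_le_iterK volume P hJo hJb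
    ((nonempty_of_measure_ne_zero hSpos.ne').mono hSJ) hδ (ENNReal.ofReal_pos.2 hε).ne'
    fun x hx => Measure.smul_restrict_le_of_forall_subset
      (hJo.measurableSet.inter measurableSet_ball) (hmin x hx)
  have hS_ne_top : volume S ≠ ⊤ := (hJb.subset hSJ).measure_lt_top.ne
  refine ⟨c * volume S, ENNReal.mul_pos hc.ne' hSpos.ne', n + 1, le_add_self, fun x hx A hA => ?_⟩
  calc c * volume S * ((volume S)⁻¹ * volume (A ∩ S))
      = c * volume (A ∩ S) := by
        rw [mul_assoc, ← mul_assoc (volume S), ENNReal.mul_inv_cancel hSpos.ne' hS_ne_top, one_mul]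
    _ ≤ c * volume (A ∩ J) := by gcongr
    _ ≤ iterK P (n + 1) x A := by
        simpa [Measure.restrict_apply hA] using Measure.le_iff.1 (hn x (hSJ hx)) A hA

/-- Proposition 6 (unifsmallprop): if 𝒳 is an open subset of ℝ^d containing a bounded
rectangle J ⊇ K_{2D} ∖ K_D, where K_{2D} ∖ K_D has positive Lebesgue measure, and P(x,dy)
≥ ε Leb(dy) whenever x,y ∈ J with |y−x| < δ, then (A3) holds with
ν* = Uniform(K_{2D} ∖ K_D). -/
theorem A3_of_epsilon_delta
    (d : ℕ) (𝒳 : Set (EuclideanSpace ℝ (Fin d))) (hopen : IsOpen 𝒳)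
    (P : Kernel (EuclideanSpace ℝ (Fin d)) (EuclideanSpace ℝ (Fin d))) [IsMarkovKernel P]
    (D : ℝ) (hD : 0 < D)
    (hjump : ∀ x, P x {y | dist x y ≤ D} = 1)
    (K : Set (EuclideanSpace ℝ (Fin d))) (hKmeas : MeasurableSet K) (hKne : K.Nonempty)
    (hKbdd : Bornology.IsBounded K) (hKX : K ⊆ 𝒳)
    -- the bounded rectangle J
    (a b : Fin d → ℝ) (hab : ∀ i, a i < b i)
    (J : Set (EuclideanSpace ℝ (Fin d)))
    (hJ : J = {x | ∀ i, x i ∈ Ioo (a i) (b i)})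
    (hSJ : cthickening (2 * D) K \ cthickening D K ⊆ J) (hJX : J ⊆ 𝒳)
    -- K_{2D} ∖ K_D has positive Lebesgue measure
    (hSpos : 0 < volume (cthickening (2 * D) K \ cthickening D K))
    -- the ε-δ minorization condition (7)
    (δ ε : ℝ) (hδ : 0 < δ) (hε : 0 < ε)
    (hmin : ∀ x ∈ J, ∀ A : Set (EuclideanSpace ℝ (Fin d)), MeasurableSet A →
        A ⊆ J ∩ ball x δ → ENNReal.ofReal ε * volume A ≤ P x A) :
    -- (A3) with ν* = Uniform(K_{2D} ∖ K_D)
    ∃ ε' : ℝ≥0∞, 0 < ε' ∧ ∃ n₀ : ℕ, 1 ≤ n₀ ∧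
      ∀ x ∈ cthickening (2 * D) K \ cthickening D K,
        ∀ A : Set (EuclideanSpace ℝ (Fin d)), MeasurableSet A →
          ε' * ((volume (cthickening (2 * D) K \ cthickening D K))⁻¹ *
              volume (A ∩ (cthickening (2 * D) K \ cthickening D K))) ≤
            iterK P n₀ x A :=
  A3_of_epsilon_delta_general d P D K a b J hJ hSJ hSpos δ ε hδ hε hmin
end

section
/- In the adversarial setup, assume (A1) holds with constant M and probability measure μ*. Let {Y_n} be the cemetery process which starts with Y_0 distributed according to μ*, follows the transition kernel P, and dies as soon as it hits K_D. Let ℓ₀ = sup{η(x,𝟎) : x ∈ K_D}, for L > ℓ₀ let B_L = {x ∈ 𝒳 : η(x,𝟎) ≥ L}, and let N_L be the total number of iterations the cemetery process spends in B_L before it dies. Then for every n ∈ ℕ, every L > ℓ₀, and every starting point x ∈ K of the adversarial process, ℙ(X_n ∈ B_L | X_0 = x) ≤ M · 𝔼(N_L). -/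
open MeasureTheory ProbabilityTheory Filter Metric Set
open scoped ENNReal Topology

/-!
Split the event `{Xₙ ∈ B_L}` according to the last time `σ < n` at which `X` visits `K_D`
(time `0` is such a visit, and `B_L` lies outside `K_D`). Almost surely `X_σ ∉ K`, since from
`K` the process cannot jump out of `K_D`; so from `X_σ ∈ K_D \ K` it moves by `P`, and by (A1)
the part of its next law that lies outside `K_D` is at most `M μ*`. As long as `X` then avoids
`K_D` it moves by `P` killed on `K_D`, so its sub-law `t + 1` steps after `σ` stays below `M`
times the law of the cemetery process alive at time `t`, which is `survMeas P K_D μ* t`.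
Summing over `σ` bounds `ℙ(Xₙ ∈ B_L)` by `M ∑ₜ ℙ(Y_t ∈ B_L, t < killing time) = M 𝔼(N_L)`.
-/

namespace MeasureTheory.Measure

variable {X : Type*} [MeasurableSpace X]

lemma bind_mono_left {ν m : Measure X} (κ : Kernel X X) (h : ν ≤ m) :
    ν.bind κ ≤ m.bind κ :=
  le_iff.2 fun A hA => by
    rw [bind_apply hA κ.aemeasurable, bind_apply hA κ.aemeasurable]
    exact lintegral_mono' h le_rfl

lemma restrict_bind_le_smul {ρ ν : Measure X} {κ : Kernel X X} {S B : Set X}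
    (hB : MeasurableSet B) (hS : ∀ᵐ x ∂ρ, x ∈ S) (hκ : ∀ x ∈ S, (κ x).restrict B ≤ ν) :
    (ρ.bind κ).restrict B ≤ ρ univ • ν :=
  le_iff.2 fun A hA =>
    calc (ρ.bind κ).restrict B A = ∫⁻ x, κ x (A ∩ B) ∂ρ := by
          rw [restrict_apply hA, bind_apply (hA.inter hB) κ.aemeasurable]
      _ ≤ ∫⁻ _, ν A ∂ρ := lintegral_mono_ae <| hS.mono fun x hx => by
          simpa only [restrict_apply hA] using le_iff'.1 (hκ x hx) A
      _ = (ρ univ • ν) A := by rw [lintegral_const, mul_comm]; rfl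

end MeasureTheory.Measure

section Metric

variable {𝒳 : Type*} [MetricSpace 𝒳]

lemma dist_lt_of_sSup_image_dist_lt {S : Set 𝒳} (hS : Bornology.IsBounded S) {o : 𝒳} {L : ℝ}
    (hL : sSup ((fun z => dist z o) '' S) < L) {z : 𝒳} (hz : z ∈ S) : dist z o < L := by
  obtain ⟨R, hR⟩ := hS.subset_closedBall o
  have hbdd : BddAbove ((fun z => dist z o) '' S) := ⟨R, by
    rintro _ ⟨y, hy, rfl⟩
    exact hR hy⟩
  exact (le_csSup hbdd ⟨z, hz, rfl⟩).trans_lt hL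

variable [MeasurableSpace 𝒳] [BorelSpace 𝒳]

/-- A jump of length at most `D` from `K_D` lands in `K_{2D}`, where (A1) applies. -/
lemma restrict_compl_cthickening_le {P : Kernel 𝒳 𝒳} [IsMarkovKernel P] {D : ℝ} (hD : 0 ≤ D)
    (hjump : ∀ x, P x {y | dist x y ≤ D} = 1) {K : Set 𝒳} {M : ℝ≥0∞} {μstar : Measure 𝒳}
    (hA1 : ∀ x ∈ cthickening D K \ K, ∀ A : Set 𝒳,
        A ⊆ cthickening (2 * D) K \ cthickening D K → MeasurableSet A →
        P x A ≤ M * μstar A)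
    {x : 𝒳} (hx : x ∈ cthickening D K \ K) :
    (P x).restrict (cthickening D K)ᶜ ≤ M • μstar := by
  set C := cthickening D K
  have hball : {y | dist x y ≤ D} = closedBall x D := by
    ext y
    simp [dist_comm]
  have hball_null : P x (closedBall x D)ᶜ = 0 := by
    rw [prob_compl_eq_zero_iff measurableSet_closedBall, ← hball, hjump x]
  have hball_sub : closedBall x D ⊆ cthickening (2 * D) K := by
    rw [two_mul]
    exact (closedBall_subset_cthickening hx.1 D).trans (cthickening_cthickening_subset hD hD K)
  have hsub : ∀ A, A ∩ Cᶜ ∩ closedBall x D ⊆ cthickening (2 * D) K \ C :=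
    fun A y hy => ⟨hball_sub hy.2, hy.1.2⟩
  refine Measure.le_iff.2 fun A hA => ?_
  calc (P x).restrict Cᶜ A = P x (A ∩ Cᶜ ∩ closedBall x D) := by
        rw [Measure.restrict_apply hA, measure_inter_conull hball_null]
    _ ≤ M * μstar (A ∩ Cᶜ ∩ closedBall x D) :=
        hA1 x hx _ (hsub A) ((hA.inter isClosed_cthickening.measurableSet.compl).inter
          measurableSet_closedBall)
    _ ≤ (M • μstar) A := by
        grw [inter_assoc, inter_subset_left]
        rfl

end Metric

lemma Nat.exists_last_mem_before {α : Type*} {u : ℕ → α} {C : Set α} (h0 : u 0 ∈ C) :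
    ∀ {n}, u n ∉ C → ∃ σ t, σ + 1 + t = n ∧ u σ ∈ C ∧ ∀ i ≤ t, u (σ + 1 + i) ∉ C
  | 0, hn => absurd h0 hn
  | n + 1, hn => by
    by_cases hun : u n ∈ C
    · refine ⟨n, 0, rfl, hun, fun i hi => ?_⟩
      obtain rfl : i = 0 := by omega
      exact hn
    · obtain ⟨σ, t, rfl, hσ, ht⟩ := exists_last_mem_before h0 hun
      refine ⟨σ, t + 1, by omega, hσ, fun i hi => ?_⟩
      rcases Nat.lt_or_ge i (t + 1) with hit | hit
      · exact ht i (by omega)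
      · obtain rfl : i = t + 1 := by omega
        exact hn

section Adversarial

variable {𝒳 Ω : Type*}

def excursionEvent (Xp : ℕ → Ω → 𝒳) (C K : Set 𝒳) (σ t : ℕ) : Set Ω :=
  {ω | Xp σ ω ∈ C \ K ∧ ∀ i ≤ t, Xp (σ + 1 + i) ω ∉ C}

variable [MeasurableSpace 𝒳] {Xp : ℕ → Ω → 𝒳}

lemma measurableSet_comap_trajectory {k j : ℕ} (hkj : k ≤ j) {S : Set 𝒳} (hS : MeasurableSet S) :
    MeasurableSet[MeasurableSpace.comap (fun ω (i : Fin (j + 1)) => Xp i ω) inferInstance]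
      {ω | Xp k ω ∈ S} :=
  ⟨(fun f => f ⟨k, by omega⟩) ⁻¹' S, measurable_pi_apply _ hS, rfl⟩

lemma measurableSet_excursionEvent {C : Set 𝒳} (hC : MeasurableSet C) (hK : MeasurableSet K)
    (σ t : ℕ) :
    MeasurableSet[MeasurableSpace.comap (fun ω (i : Fin (σ + 1 + t + 1)) => Xp i ω) inferInstance]
      (excursionEvent Xp C K σ t) := by
  have hEq : excursionEvent Xp C K σ t =
      {ω | Xp σ ω ∈ C \ K} ∩ ⋂ i, ⋂ (_ : i ≤ t), {ω | Xp (σ + 1 + i) ω ∈ Cᶜ} := by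
    ext ω
    simp [excursionEvent]
  rw [hEq]
  exact (measurableSet_comap_trajectory (by omega) (hC.diff hK)).inter
    (.iInter fun i => .iInter fun _ => measurableSet_comap_trajectory (by omega) hC.compl)

variable [MetricSpace 𝒳] [MeasurableSpace Ω] {P : Kernel 𝒳 𝒳} {K : Set 𝒳} {D : ℝ} {x₀ : 𝒳}
  {μ : Measure Ω}

lemma IsAdversarial.map_restrict_inter_succ (hadv : IsAdversarial P K D x₀ μ Xp) {m : ℕ}
    {E : Set Ω} (hE : MeasurableSet[MeasurableSpace.comap
      (fun ω (i : Fin (m + 1)) => Xp i ω) inferInstance] E)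
    (hEK : E ⊆ {ω | Xp m ω ∉ K}) {B : Set 𝒳} (hB : MeasurableSet B) :
    (μ.restrict (E ∩ Xp (m + 1) ⁻¹' B)).map (Xp (m + 1)) =
      (((μ.restrict E).map (Xp m)).bind P).restrict B := by
  ext A hA
  have hstep := hadv.2.2.1 m (A ∩ B) (hA.inter hB) E hE
  rw [inter_eq_left.2 hEK] at hstep
  rw [Measure.map_apply (hadv.1 _) hA, Measure.restrict_apply (hadv.1 _ hA),
    Measure.restrict_apply hA, Measure.bind_apply (hA.inter hB) P.aemeasurable,
    lintegral_map (P.measurable_coe (hA.inter hB)) (hadv.1 m), ← hstep]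
  congr 1
  ext ω
  simp only [mem_inter_iff, mem_preimage, mem_ofPred_eq]
  tauto

theorem IsAdversarial.map_restrict_excursionEvent_le [IsProbabilityMeasure μ]
    (hadv : IsAdversarial P K D x₀ μ Xp) (hK : MeasurableSet K) {C : Set 𝒳}
    (hC : MeasurableSet C) (hKC : K ⊆ C) {M : ℝ≥0∞} {μstar : Measure 𝒳}
    (hexit : ∀ x ∈ C \ K, (P x).restrict Cᶜ ≤ M • μstar) (σ : ℕ) :
    ∀ t, (μ.restrict (excursionEvent Xp C K σ t)).map (Xp (σ + 1 + t)) ≤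
      M • survMeas P C μstar t
  | 0 => by
    have hEq : excursionEvent Xp C K σ 0 = {ω | Xp σ ω ∈ C \ K} ∩ Xp (σ + 1) ⁻¹' Cᶜ := by
      ext ω
      simp [excursionEvent]
    rw [hEq, hadv.map_restrict_inter_succ (measurableSet_comap_trajectory le_rfl (hC.diff hK))
      (fun ω hω => hω.2) hC.compl]
    show _ ≤ M • μstar
    refine (Measure.restrict_bind_le_smul hC.compl ((ae_map_iff (hadv.1 σ).aemeasurable
      (hC.diff hK)).2 (ae_restrict_of_forall_mem (hadv.1 σ (hC.diff hK)) fun ω hω => hω))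
      hexit).trans (Measure.le_iff'.2 fun A => ?_)
    simpa [Measure.map_apply (hadv.1 σ) MeasurableSet.univ] using
      mul_le_of_le_one_left zero_le prob_le_one
  | t + 1 => by
    have hEq : excursionEvent Xp C K σ (t + 1) =
        excursionEvent Xp C K σ t ∩ Xp (σ + 1 + t + 1) ⁻¹' Cᶜ := by
      ext ω
      simp only [excursionEvent, mem_inter_iff, mem_ofPred_eq, mem_preimage, mem_compl_iff]
      refine ⟨fun ⟨hσ, h⟩ => ⟨⟨hσ, fun i hi => h i (by omega)⟩, h (t + 1) le_rfl⟩,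
        fun ⟨⟨hσ, h⟩, hlast⟩ => ⟨hσ, fun i hi => ?_⟩⟩
      rcases Nat.lt_or_ge i (t + 1) with hit | hit
      · exact h i (by omega)
      · obtain rfl : i = t + 1 := by omega
        exact hlast
    show (μ.restrict _).map (Xp (σ + 1 + t + 1)) ≤ _
    rw [hEq, hadv.map_restrict_inter_succ (measurableSet_excursionEvent hC hK σ t)
      (fun ω hω hK' => hω.2 t le_rfl (hKC hK')) hC.compl]
    calc _ ≤ ((M • survMeas P C μstar t).bind P).restrict Cᶜ :=
          Measure.restrict_mono subset_rfl (Measure.bind_mono_left P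
            (map_restrict_excursionEvent_le hadv hK hC hKC hexit σ t))
      _ = M • survMeas P C μstar (t + 1) := by
          rw [Measure.bind_smul, Measure.restrict_smul]
          rfl

theorem IsAdversarial.measure_lastVisit_le_mul_survMeas [OpensMeasurableSpace 𝒳] [IsProbabilityMeasure μ]
    (hadv : IsAdversarial P K D x₀ μ Xp) (hK : MeasurableSet K) {M : ℝ≥0∞}
    {μstar : Measure 𝒳} (hexit : ∀ x ∈ cthickening D K \ K,
      (P x).restrict (cthickening D K)ᶜ ≤ M • μstar)
    {B : Set 𝒳} (hB : MeasurableSet B) (σ t : ℕ) :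
    μ {ω | Xp σ ω ∈ cthickening D K ∧ (∀ i ≤ t, Xp (σ + 1 + i) ω ∉ cthickening D K) ∧
        Xp (σ + 1 + t) ω ∈ B} ≤ M * survMeas P (cthickening D K) μstar t B := by
  set C := cthickening D K
  have hC : MeasurableSet C := isClosed_cthickening.measurableSet
  have hcover : {ω | Xp σ ω ∈ C ∧ (∀ i ≤ t, Xp (σ + 1 + i) ω ∉ C) ∧ Xp (σ + 1 + t) ω ∈ B} ⊆
      ({ω | Xp σ ω ∈ K} ∩ {ω | Xp (σ + 1) ω ∉ C}) ∪
        (Xp (σ + 1 + t) ⁻¹' B ∩ excursionEvent Xp C K σ t) := by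
    rintro ω ⟨hσ, hout, hB⟩
    by_cases hσK : Xp σ ω ∈ K
    · exact Or.inl ⟨hσK, hout 0 t.zero_le⟩
    · exact Or.inr ⟨hB, ⟨hσ, hσK⟩, hout⟩
  calc _ ≤ μ ({ω | Xp σ ω ∈ K} ∩ {ω | Xp (σ + 1) ω ∉ C}) +
          μ (Xp (σ + 1 + t) ⁻¹' B ∩ excursionEvent Xp C K σ t) :=
        (measure_mono hcover).trans (measure_union_le _ _)
    _ = (μ.restrict (excursionEvent Xp C K σ t)).map (Xp (σ + 1 + t)) B := by
        rw [hadv.2.2.2 σ, zero_add, Measure.map_apply (hadv.1 _) hB,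
          Measure.restrict_apply (hadv.1 _ hB)]
    _ ≤ M * survMeas P C μstar t B :=
        Measure.le_iff'.1 (hadv.map_restrict_excursionEvent_le hK hC
          (self_subset_cthickening K) hexit σ t) B

end Adversarial

theorem cemetery_occupation_bound_general
    {𝒳 : Type*} [MeasurableSpace 𝒳] [MetricSpace 𝒳] [BorelSpace 𝒳] (o : 𝒳)
    (P : Kernel 𝒳 𝒳) [IsMarkovKernel P]
    (D : ℝ) (hD : 0 < D) (hjump : ∀ x, P x {y | dist x y ≤ D} = 1)
    (K : Set 𝒳) (hKmeas : MeasurableSet K)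
    (hKbdd : Bornology.IsBounded K)
    -- (A1)
    (M : ℝ≥0∞) (μstar : Measure 𝒳)
    (hA1 : ∀ x ∈ cthickening D K \ K, ∀ A : Set 𝒳,
        A ⊆ cthickening (2 * D) K \ cthickening D K → MeasurableSet A →
        P x A ≤ M * μstar A)
    -- the adversarial process, started at x ∈ K
    {Ω : Type*} [MeasurableSpace Ω] (μ : Measure Ω) [IsProbabilityMeasure μ]
    (x : 𝒳) (hx : x ∈ K) (Xp : ℕ → Ω → 𝒳)
    (hadv : IsAdversarial P K D x μ Xp)
    -- L > ℓ₀ = sup of distances from 𝟎 over K_D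
    (L : ℝ) (hL : sSup ((fun z => dist z o) '' cthickening D K) < L)
    (n : ℕ) :
    μ {ω | L ≤ dist (Xp n ω) o} ≤
      M * ∑' j : ℕ, survMeas P (cthickening D K) μstar j {z | L ≤ dist z o} := by
  set C := cthickening D K
  set BL : Set 𝒳 := {z | L ≤ dist z o}
  have hBL : MeasurableSet BL := measurableSet_le measurable_const (by fun_prop)
  have hBLC : BL ⊆ Cᶜ := fun z hz hzC =>
    (dist_lt_of_sSup_image_dist_lt hKbdd.cthickening hL hzC).not_ge hz
  have hcover : {ω | Xp n ω ∈ BL} ⊆ ⋃ t ∈ Finset.range n, {ω | Xp (n - 1 - t) ω ∈ C ∧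
      (∀ i ≤ t, Xp (n - 1 - t + 1 + i) ω ∉ C) ∧ Xp (n - 1 - t + 1 + t) ω ∈ BL} := by
    intro ω hω
    obtain ⟨σ, t, rfl, hσ, hout⟩ := Nat.exists_last_mem_before (u := fun k => Xp k ω)
      (by simpa only [hadv.2.1 ω] using self_subset_cthickening K hx) (hBLC hω)
    refine mem_biUnion (x := t) (Finset.mem_range.2 (by omega)) ?_
    rw [show σ + 1 + t - 1 - t = σ by omega]
    exact ⟨hσ, hout, hω⟩
  calc μ {ω | Xp n ω ∈ BL} ≤ ∑ t ∈ Finset.range n, μ {ω | Xp (n - 1 - t) ω ∈ C ∧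
        (∀ i ≤ t, Xp (n - 1 - t + 1 + i) ω ∉ C) ∧ Xp (n - 1 - t + 1 + t) ω ∈ BL} :=
        (measure_mono hcover).trans (measure_biUnion_finset_le _ _)
    _ ≤ ∑ t ∈ Finset.range n, M * survMeas P C μstar t BL := Finset.sum_le_sum fun t _ =>
        hadv.measure_lastVisit_le_mul_survMeas hKmeas
          (fun _ hy => restrict_compl_cthickening_le hD.le hjump hA1 hy) hBL _ t
    _ ≤ M * ∑' t, survMeas P C μstar t BL := by
        rw [← Finset.mul_sum]
        gcongr
        exact ENNReal.sum_le_tsum _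

/-- Lemma 8 (lemma-cembound): under (A1), for every n, every L > ℓ₀ and every starting
point x ∈ K, ℙ(X_n ∈ B_L) ≤ M ⬝ 𝔼(N_L), where N_L is the occupation time of
B_L = {z : η(z,𝟎) ≥ L} by the cemetery process started from μ* and killed on hitting K_D.
The expected occupation time 𝔼(N_L) is expressed as ∑_{j≥0} ℙ(Y_j ∈ B_L, not yet killed). -/
theorem cemetery_occupation_bound
    {𝒳 : Type*} [MeasurableSpace 𝒳] [MetricSpace 𝒳] [BorelSpace 𝒳] (o : 𝒳)
    (P : Kernel 𝒳 𝒳) [IsMarkovKernel P]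
    (D : ℝ) (hD : 0 < D) (hjump : ∀ x, P x {y | dist x y ≤ D} = 1)
    (K : Set 𝒳) (hKmeas : MeasurableSet K) (hKne : K.Nonempty)
    (hKbdd : Bornology.IsBounded K)
    -- (A1)
    (M : ℝ≥0∞) (hM : M ≠ ⊤) (μstar : Measure 𝒳) [IsProbabilityMeasure μstar]
    (hconc : μstar (cthickening (2 * D) K \ cthickening D K) = 1)
    (hA1 : ∀ x ∈ cthickening D K \ K, ∀ A : Set 𝒳,
        A ⊆ cthickening (2 * D) K \ cthickening D K → MeasurableSet A →
        P x A ≤ M * μstar A)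
    -- the adversarial process, started at x ∈ K
    {Ω : Type*} [MeasurableSpace Ω] (μ : Measure Ω) [IsProbabilityMeasure μ]
    (x : 𝒳) (hx : x ∈ K) (Xp : ℕ → Ω → 𝒳)
    (hadv : IsAdversarial P K D x μ Xp)
    -- L > ℓ₀ = sup of distances from 𝟎 over K_D
    (L : ℝ) (hL : sSup ((fun z => dist z o) '' cthickening D K) < L)
    (n : ℕ) :
    μ {ω | L ≤ dist (Xp n ω) o} ≤
      M * ∑' j : ℕ, survMeas P (cthickening D K) μstar j {z | L ≤ dist z o} :=
  cemetery_occupation_bound_general o P D hD hjump K hKmeas hKbdd M μstar hA1 μ x hx Xp hadv L hL n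
end

section
/- Let A, B ⊆ ℝ^d be two closed balls with radii r and R where 0 < r ≤ R, such that their centers are a distance w apart with w ≤ 3r/2 + (R − r). Then Leb(A ∩ B) ≥ r^d · v_d, where v_d is the Lebesgue measure of the intersection of two unit balls in ℝ^d whose centers are a distance 3/2 apart. -/
open MeasureTheory Metric
open scoped ENNReal Pointwise

/-!
Move the center of the small ball to the point `z` at distance `3r/2` from `x` on the ray from `x`
through `y`. Then `A ∩ closedBall z r ⊆ B`: if `y` lies between `x` and `z`, every ball around a
point of the lens contains `x` and `z`, hence `y`, by convexity; otherwise `closedBall z r ⊆ B`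
because `dist z y ≤ R - r`. The lens `closedBall x r ∩ closedBall z r` is the image of the
reference lens of volume `v_d` under a dilation by `r`, an isometry and a translation.
-/

theorem closedBall_inter_closedBall_subset_of_mem_segment {E : Type*}
    [SeminormedAddCommGroup E] [NormedSpace ℝ E] {x y z : E} (r : ℝ) (hy : y ∈ segment ℝ x z) :
    closedBall x r ∩ closedBall z r ⊆ closedBall y r := by
  rintro p ⟨hx, hz⟩
  rw [mem_closedBall_comm] at hx hz ⊢
  exact (convex_closedBall p r).segment_subset hx hz hy

theorem exists_norm_eq_one_smul_eq {E : Type*} [NormedAddCommGroup E] [NormedSpace ℝ E]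
    [Nontrivial E] (v : E) : ∃ u : E, ‖u‖ = 1 ∧ ‖v‖ • u = v := by
  rcases eq_or_ne v 0 with rfl | hv
  · obtain ⟨u, hu⟩ := exists_norm_eq E zero_le_one
    exact ⟨u, hu, by simp⟩
  · exact ⟨‖v‖⁻¹ • v, by simp [norm_smul, hv], by simp [smul_smul, hv]⟩

theorem exists_dist_eq_and_closedBall_inter_closedBall_subset {E : Type*}
    [NormedAddCommGroup E] [NormedSpace ℝ E] [Nontrivial E] {x y : E} {r R s : ℝ}
    (hs : 0 ≤ s) (hrR : r ≤ R) (hxy : dist x y ≤ s + (R - r)) :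
    ∃ z, dist x z = s ∧ closedBall x r ∩ closedBall z r ⊆ closedBall y R := by
  obtain ⟨u, hu, hyx⟩ := exists_norm_eq_one_smul_eq (y - x)
  have hy : y = x + dist x y • u := by rw [dist_comm, dist_eq_norm, hyx, add_sub_cancel]
  set w := dist x y
  refine ⟨x + s • u, by simp [norm_smul, hu, hs], ?_⟩
  rcases le_or_gt w s with hws | hsw
  · have hseg : y ∈ segment ℝ x (x + s • u) := by
      rw [mem_segment_iff_sameRay, hy, show x + s • u - (x + w • u) = (s - w) • u by module,
        add_sub_cancel_left]
      exact (SameRay.sameRay_nonneg_smul_left u dist_nonneg).nonneg_smul_right (sub_nonneg.2 hws)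
    exact (closedBall_inter_closedBall_subset_of_mem_segment r hseg).trans
      (closedBall_subset_closedBall hrR)
  · refine Set.inter_subset_right.trans (closedBall_subset_closedBall' ?_)
    rw [hy, dist_eq_norm, show x + s • u - (x + w • u) = (s - w) • u by module, norm_smul, hu,
      Real.norm_of_nonpos (by linarith)]
    linarith

theorem measure_closedBall_inter_closedBall_sub {G : Type*} [NormedAddCommGroup G]
    [MeasurableSpace G] (μ : Measure G) [μ.IsAddLeftInvariant] (x z : G) (r ρ : ℝ) :
    μ (closedBall x r ∩ closedBall z ρ) = μ (closedBall 0 r ∩ closedBall (z - x) ρ) := by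
  rw [← measure_vadd μ x (closedBall 0 r ∩ closedBall (z - x) ρ), Set.vadd_set_inter,
    vadd_closedBall, vadd_closedBall, vadd_eq_add, vadd_eq_add, add_zero, add_sub_cancel]

theorem measure_closedBall_inter_closedBall_smul {E : Type*} [NormedAddCommGroup E]
    [NormedSpace ℝ E] [MeasurableSpace E] [BorelSpace E] [FiniteDimensional ℝ E]
    (μ : Measure E) [μ.IsAddHaarMeasure] {r : ℝ} (hr : 0 < r) (a : E) :
    μ (closedBall 0 r ∩ closedBall (r • a) r) =
      ENNReal.ofReal r ^ Module.finrank ℝ E * μ (closedBall 0 1 ∩ closedBall a 1) := by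
  have h := Measure.addHaar_smul μ r (closedBall 0 1 ∩ closedBall a 1)
  rwa [Set.smul_set_inter₀ hr.ne', _root_.smul_closedBall _ _ zero_le_one,
    _root_.smul_closedBall _ _ zero_le_one, smul_zero, Real.norm_of_nonneg hr.le, mul_one,
    abs_of_pos (pow_pos hr _), ENNReal.ofReal_pow hr.le] at h

section InnerProductSpace

variable {E : Type*} [NormedAddCommGroup E] [InnerProductSpace ℝ E] [FiniteDimensional ℝ E]
  [MeasurableSpace E] [BorelSpace E]

theorem volume_closedBall_zero_inter_closedBall_congr_norm {a b : E} (hab : ‖a‖ = ‖b‖)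
    (r ρ : ℝ) :
    volume (closedBall 0 r ∩ closedBall a ρ) = volume (closedBall 0 r ∩ closedBall b ρ) := by
  set Φ := Submodule.reflection (ℝ ∙ (b - a))ᗮ
  have hΦ : Φ b = a := Submodule.reflection_sub hab.symm
  have hpre : Φ ⁻¹' (closedBall 0 r ∩ closedBall a ρ) = closedBall 0 r ∩ closedBall b ρ := by
    rw [← hΦ, ← map_zero Φ, Set.preimage_inter, LinearIsometryEquiv.preimage_closedBall,
      LinearIsometryEquiv.preimage_closedBall]
    simp
  rw [← hpre, Φ.measurePreserving.measure_preimage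
    (measurableSet_closedBall.inter measurableSet_closedBall).nullMeasurableSet]

theorem volume_closedBall_inter_closedBall_congr_dist {x z x' z' : E}
    (h : dist x z = dist x' z') (r ρ : ℝ) :
    volume (closedBall x r ∩ closedBall z ρ) = volume (closedBall x' r ∩ closedBall z' ρ) := by
  rw [measure_closedBall_inter_closedBall_sub volume,
    measure_closedBall_inter_closedBall_sub volume x']
  refine volume_closedBall_zero_inter_closedBall_congr_norm ?_ r ρ
  rwa [← dist_eq_norm', ← dist_eq_norm']

end InnerProductSpace

/-- Lemma 15 (balloverlap): if A, B ⊆ ℝ^d are closed balls of radii 0 < r ≤ R whose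
centers are at distance w ≤ 3r/2 + (R − r), then Leb(A ∩ B) ≥ r^d · v_d, where v_d is
the volume of the intersection of two unit balls at distance 3/2. -/
theorem ball_overlap_volume
    (d : ℕ) (hd : 0 < d)
    (v : ℝ≥0∞)
    (hv : v = volume (closedBall (0 : EuclideanSpace ℝ (Fin d)) 1 ∩
        closedBall (EuclideanSpace.single (⟨0, hd⟩ : Fin d) ((3 : ℝ) / 2)) 1))
    (x y : EuclideanSpace ℝ (Fin d)) (r R : ℝ) (hr : 0 < r) (hrR : r ≤ R)
    (hw : dist x y ≤ 3 * r / 2 + (R - r)) :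
    ENNReal.ofReal r ^ d * v ≤ volume (closedBall x r ∩ closedBall y R) := by
  have : Nonempty (Fin d) := ⟨⟨0, hd⟩⟩
  obtain ⟨z, hxz, hsub⟩ :=
    exists_dist_eq_and_closedBall_inter_closedBall_subset (by positivity) hrR hw
  set a := EuclideanSpace.single (⟨0, hd⟩ : Fin d) ((3 : ℝ) / 2)
  have hdist : dist (0 : EuclideanSpace ℝ (Fin d)) (r • a) = dist x z := by
    rw [hxz, dist_zero_left, norm_smul, Real.norm_of_nonneg hr.le]
    simp only [a, PiLp.norm_single, norm_div, Real.norm_ofNat]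
    ring
  calc ENNReal.ofReal r ^ d * v
      = volume (closedBall 0 r ∩ closedBall (r • a) r) := by
        rw [measure_closedBall_inter_closedBall_smul volume hr, finrank_euclideanSpace_fin, hv]
    _ = volume (closedBall x r ∩ closedBall z r) :=
        volume_closedBall_inter_closedBall_congr_dist hdist r r
    _ ≤ volume (closedBall x r ∩ closedBall y R) := 
        measure_mono (Set.subset_inter Set.inter_subset_left hsub)
end

section
/- Let P be a Markov transition kernel on an open subset 𝒳 ⊆ ℝ^d. Let J = (a₁,b₁) × ⋯ × (a_d,b_d) ⊆ 𝒳 be a rectangular subset, where a_i < b_i are extended real numbers. Suppose there are δ > 0 and ε > 0 such that P(x, dy) ≥ ε Leb(dy) whenever x, y ∈ J with |y − x| < δ. Then for each n ∈ ℕ there is β_n > 0 such that Pⁿ(x, dy) ≥ β_n Leb(dy) whenever x, y ∈ J with |y − x| < δ(n+1)/2. -/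
open MeasureTheory ProbabilityTheory Filter Metric Set
open scoped ENNReal Topology

/-!
Write `Pⁿ⁺¹(x, A) = ∫ P(w, A) Pⁿ(x, dw)`. By induction `Pⁿ(x, ·)` dominates `βₙ Leb` on
`S = J ∩ B(x, δ(n+1)/2)`, and `P(w, ·)` dominates `ε Leb` on `J ∩ B(w, δ)`; Tonelli turns the
resulting bound into `βₙ ε ∫_A Leb(S ∩ B(v, δ)) dv`. For `v ∈ J ∩ B(x, δ(n+2)/2)` the set
`S ∩ B(v, δ)` contains `J ∩ B(y, δ/4)` for a point `y` of the segment `[v, x] ⊆ J`, and since `J`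
is a product of intervals, `Leb(J ∩ B(y, δ/4))` is bounded below uniformly in `y ∈ J` by the
volume of a box of fixed size.
-/

@[simp]
lemma iterK_one {X : Type*} [MeasurableSpace X] (P : Kernel X X) : iterK P 1 = P :=
  Kernel.comp_id P

lemma iterK_succ {X : Type*} [MeasurableSpace X] (P : Kernel X X) (n : ℕ) :
    iterK P (n + 1) = P ∘ₖ iterK P n :=
  rfl

section Chaining

variable {X : Type*} [MeasurableSpace X]

lemma mul_setLIntegral_le_of_forall_subset {μ ν : Measure X} {S : Set X} (hS : MeasurableSet S)
    {β : ℝ≥0∞} (h : ∀ B, MeasurableSet B → B ⊆ S → β * μ B ≤ ν B) (f : X → ℝ≥0∞) :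
    β * ∫⁻ w in S, f w ∂μ ≤ ∫⁻ w in S, f w ∂ν := by
  have hle : β • μ.restrict S ≤ ν.restrict S := Measure.le_iff.2 fun B hB => by
    simpa [Measure.restrict_apply hB] using h _ (hB.inter hS) inter_subset_right
  simpa [lintegral_smul_measure] using lintegral_mono' hle le_rfl

variable [PseudoMetricSpace X] [OpensMeasurableSpace X] [SecondCountableTopology X]

lemma setLIntegral_measure_inter_ball_comm (μ : Measure X) [SFinite μ] (S A : Set X) (r : ℝ) :
    ∫⁻ w in S, μ (A ∩ ball w r) ∂μ = ∫⁻ v in A, μ (S ∩ ball v r) ∂μ := by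
  set T : Set (X × X) := {p | p.2 ∈ ball p.1 r}
  have hT : MeasurableSet T :=
    measurableSet_lt (measurable_snd.dist measurable_fst) measurable_const
  have hleft : ∀ w, Prod.mk w ⁻¹' T = ball w r := fun w => rfl
  have hright : ∀ v, (fun w => (w, v)) ⁻¹' T = ball v r := fun v => ext fun w => mem_ball_comm
  have h := (Measure.prod_apply (μ := μ.restrict S) (ν := μ.restrict A) hT).symm.trans
    (Measure.prod_apply_symm hT)
  simpa only [hleft, hright, Measure.restrict_apply measurableSet_ball, inter_comm] using h

lemma le_comp_apply_of_minorization {μ : Measure X} [SFinite μ] {P Q : Kernel X X}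
    {J S A : Set X} {x : X} {β ε c : ℝ≥0∞} {δ : ℝ} (hS : MeasurableSet S)
    (hQ : ∀ B, MeasurableSet B → B ⊆ S → β * μ B ≤ Q x B)
    (hP : ∀ w ∈ S, ∀ A', MeasurableSet A' → A' ⊆ J ∩ ball w δ → ε * μ A' ≤ P w A')
    (hA : MeasurableSet A) (hAJ : A ⊆ J) (hc : ∀ v ∈ A, c ≤ μ (S ∩ ball v δ)) :
    β * (ε * c) * μ A ≤ (P ∘ₖ Q) x A := by
  have hPA : ∀ w ∈ S, ε * μ (A ∩ ball w δ) ≤ P w A := fun w hw =>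
    (hP w hw _ (hA.inter measurableSet_ball) (inter_subset_inter_left _ hAJ)).trans
      (measure_mono inter_subset_left)
  calc β * (ε * c) * μ A = β * (ε * ∫⁻ _ in A, c ∂μ) := by rw [setLIntegral_const]; ring
    _ ≤ β * (ε * ∫⁻ v in A, μ (S ∩ ball v δ) ∂μ) := by
      gcongr β * (ε * ?_); exact setLIntegral_mono' hA hc
    _ = β * (ε * ∫⁻ w in S, μ (A ∩ ball w δ) ∂μ) := by
      rw [setLIntegral_measure_inter_ball_comm]
    _ ≤ β * ∫⁻ w in S, ε * μ (A ∩ ball w δ) ∂μ := by gcongr; exact lintegral_const_mul_le _ _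
    _ ≤ ∫⁻ w in S, ε * μ (A ∩ ball w δ) ∂(Q x) := mul_setLIntegral_le_of_forall_subset hS hQ _
    _ ≤ ∫⁻ w in S, P w A ∂(Q x) := setLIntegral_mono (P.measurable_coe hA) hPA
    _ ≤ ∫⁻ w, P w A ∂(Q x) := setLIntegral_le_lintegral _ _
    _ = (P ∘ₖ Q) x A := (Kernel.comp_apply' P Q x hA).symm

end Chaining

lemma exists_lineMap_ball_subset_ball_inter_ball {E : Type*} [NormedAddCommGroup E]
    [NormedSpace ℝ E] {x v : E} {r s ρ : ℝ} (hρr : ρ ≤ r) (hρs : ρ ≤ s)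
    (h : dist v x ≤ r + s - 2 * ρ) :
    ∃ t ∈ Icc (0 : ℝ) 1, ball (AffineMap.lineMap v x t) ρ ⊆ ball x r ∩ ball v s := by
  by_cases hD : dist v x ≤ s - ρ
  · refine ⟨1, right_mem_Icc.2 zero_le_one, ?_⟩
    rw [AffineMap.lineMap_apply_one]
    exact subset_inter (ball_subset_ball hρr) (ball_subset_ball' (by rw [dist_comm]; linarith))
  · have hpos : 0 < dist v x := by linarith
    refine ⟨(s - ρ) / dist v x, ⟨by bound, (div_le_one hpos).2 (by linarith)⟩, ?_⟩
    refine subset_inter (ball_subset_ball' ?_) (ball_subset_ball' ?_)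
    · rw [dist_lineMap_right, Real.norm_of_nonneg (by rw [sub_nonneg, div_le_one hpos]; linarith),
        sub_mul, div_mul_cancel₀ _ hpos.ne']
      linarith
    · rw [dist_lineMap_left, Real.norm_of_nonneg (by bound), div_mul_cancel₀ _ hpos.ne']
      linarith

theorem iterK_minorization_of_convex {X : Type*} [NormedAddCommGroup X] [NormedSpace ℝ X]
    [MeasurableSpace X] [OpensMeasurableSpace X] [SecondCountableTopology X] {μ : Measure X}
    [SFinite μ] (P : Kernel X X) {J : Set X} (hJc : Convex ℝ J) (hJm : MeasurableSet J) {δ : ℝ}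
    (hδ : 0 ≤ δ) {ε c : ℝ≥0∞} (hfat : ∀ y ∈ J, c ≤ μ (J ∩ ball y (δ / 4)))
    (hmin : ∀ x ∈ J, ∀ A, MeasurableSet A → A ⊆ J ∩ ball x δ → ε * μ A ≤ P x A) (n : ℕ) :
    ∀ x ∈ J, ∀ A, MeasurableSet A → A ⊆ J ∩ ball x (δ * (n + 2) / 2) →
      ε * (ε * c) ^ n * μ A ≤ iterK P (n + 1) x A := by
  induction n with
  | zero =>
    intro x hx A hA hAx
    simpa using hmin x hx A hA (by simpa using hAx)
  | succ n ih =>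
    intro x hx A hA hAx
    rw [pow_succ, ← mul_assoc, iterK_succ]
    refine le_comp_apply_of_minorization (hJm.inter measurableSet_ball) (ih x hx)
      (fun w hw => hmin w hw.1) hA (hAx.trans inter_subset_left) fun v hv => ?_
    have hvx : dist v x < δ * (n + 3) / 2 := by
      have := mem_ball.1 (hAx hv).2
      push_cast at this
      linarith
    obtain ⟨t, ht, hball⟩ := exists_lineMap_ball_subset_ball_inter_ball (x := x) (v := v)
      (r := δ * (n + 2) / 2) (s := δ) (ρ := δ / 4) (by nlinarith [mul_nonneg hδ n.cast_nonneg])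
      (by linarith) (by linarith)
    calc c ≤ μ (J ∩ ball (AffineMap.lineMap v x t) (δ / 4)) :=
          hfat _ (hJc.lineMap_mem (hAx hv).1 hx ht)
      _ ≤ μ ((J ∩ ball x (δ * (n + 2) / 2)) ∩ ball v δ) :=
          measure_mono fun w hw => ⟨⟨hw.1, (hball hw.2).1⟩, (hball hw.2).2⟩

lemma Set.OrdConnected.exists_Icc_subset {α : Type*} [Field α] [LinearOrder α]
    [IsStrictOrderedRing α] {I : Set α} (hI : I.OrdConnected) {p q m y : α}
    (hp : p ∈ I) (hq : q ∈ I) (hm₀ : 0 ≤ m) (hm : 2 * m ≤ q - p) (hy : y ∈ I) :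
    ∃ u, y ∈ Icc u (u + m) ∧ Icc u (u + m) ⊆ I := by
  by_cases h : y + m ≤ q
  · exact ⟨y, ⟨le_rfl, by linarith⟩, (Icc_subset_Icc_right h).trans (hI.out hy hq)⟩
  · refine ⟨y - m, ⟨by linarith, by linarith⟩, ?_⟩
    exact (Icc_subset_Icc (by linarith) (by linarith)).trans (hI.out hp hy)

namespace EuclideanSpace

lemma convex_setOf_forall_apply_mem {ι : Type*} {I : ι → Set ℝ} (hI : ∀ i, (I i).OrdConnected) :
    Convex ℝ {x : EuclideanSpace ℝ ι | ∀ i, x i ∈ I i} :=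
  fun _ hx _ hy _ _ ha hb hab i => by simpa using (hI i).convex (hx i) (hy i) ha hb hab

variable {ι : Type*} [Fintype ι]

lemma dist_le_sqrt_card_mul {x y : EuclideanSpace ℝ ι} {s : ℝ} (hs : 0 ≤ s)
    (h : ∀ i, |x i - y i| ≤ s) : dist x y ≤ √(Fintype.card ι) * s := by
  rw [EuclideanSpace.dist_eq, ← Real.sqrt_sq hs, ← Real.sqrt_mul (Nat.cast_nonneg _)]
  gcongr
  calc ∑ i, dist (x i) (y i) ^ 2 ≤ ∑ _i : ι, s ^ 2 := by
        gcongr with i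
        rw [Real.dist_eq]
        exact h i
    _ = Fintype.card ι * s ^ 2 := by simp

lemma measurableSet_setOf_forall_apply_mem {I : ι → Set ℝ} (hI : ∀ i, (I i).OrdConnected) :
    MeasurableSet {x : EuclideanSpace ℝ ι | ∀ i, x i ∈ I i} := by
  rw [ofPred_forall]
  exact MeasurableSet.iInter fun i => (hI i).measurableSet.preimage (by fun_prop)

lemma exists_forall_ofReal_le_volume_inter_ball {I : ι → Set ℝ} (hI : ∀ i, (I i).OrdConnected)
    (hI₂ : ∀ i, (I i).Nontrivial) {ρ : ℝ} (hρ : 0 < ρ) :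
    ∃ c : ℝ, 0 < c ∧ ∀ y : EuclideanSpace ℝ ι, (∀ i, y i ∈ I i) →
      ENNReal.ofReal c ≤ volume ({x : EuclideanSpace ℝ ι | ∀ i, x i ∈ I i} ∩ ball y ρ) := by
  set s := ρ / (√(Fintype.card ι) + 1)
  have hs : 0 < s := by positivity
  have hsρ : √(Fintype.card ι) * s < ρ := by
    have : (√(Fintype.card ι) + 1) * s = ρ := mul_div_cancel₀ _ (by positivity)
    linarith
  choose p hp q hq hpq using fun i => (hI₂ i).exists_lt
  set m : ι → ℝ := fun i => min s ((q i - p i) / 2)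
  have hm : ∀ i, 0 < m i := fun i => lt_min hs (by linarith [hpq i])
  refine ⟨∏ i, m i, Finset.prod_pos fun i _ => hm i, fun y hy => ?_⟩
  choose u hyu huI using fun i => (hI i).exists_Icc_subset (hp i) (hq i) (hm i).le
    (by linarith [min_le_right s ((q i - p i) / 2)]) (hy i)
  have hbox : ∀ w : EuclideanSpace ℝ ι, w ∈ WithLp.ofLp ⁻¹' Icc u (u + m) →
      ∀ i, |w i - y i| ≤ s := fun w hw i => by
    have hms : m i ≤ s := min_le_left _ _
    have hwu : u i ≤ w i ∧ w i ≤ u i + m i := ⟨hw.1 i, hw.2 i⟩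
    rw [abs_le]
    constructor <;> linarith [(hyu i).1, (hyu i).2]
  calc ENNReal.ofReal (∏ i, m i) = volume (WithLp.ofLp ⁻¹' Icc u (u + m)) := by
        rw [(PiLp.volume_preserving_ofLp ι).measure_preimage measurableSet_Icc.nullMeasurableSet,
          Real.volume_Icc_pi, ENNReal.ofReal_prod_of_nonneg fun i _ => (hm i).le]
        simp
    _ ≤ volume ({x : EuclideanSpace ℝ ι | ∀ i, x i ∈ I i} ∩ ball y ρ) := measure_mono fun w hw =>
      ⟨fun i => huI i ⟨hw.1 i, hw.2 i⟩,
        mem_ball.2 ((dist_le_sqrt_card_mul hs.le (hbox w hw)).trans_lt hsρ)⟩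

end EuclideanSpace

theorem iterate_minorization_on_rectangle_general
    (d : ℕ)
    (P : Kernel (EuclideanSpace ℝ (Fin d)) (EuclideanSpace ℝ (Fin d)))
    -- the rectangle J, with extended-real endpoints
    (a b : Fin d → EReal) (hab : ∀ i, a i < b i)
    (J : Set (EuclideanSpace ℝ (Fin d)))
    (hJ : J = {x | ∀ i, a i < (x i : EReal) ∧ (x i : EReal) < b i})
    (δ ε : ℝ) (hδ : 0 < δ) (hε : 0 < ε)
    (hmin : ∀ x ∈ J, ∀ A : Set (EuclideanSpace ℝ (Fin d)), MeasurableSet A →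
        A ⊆ J ∩ ball x δ → ENNReal.ofReal ε * volume A ≤ P x A) :
    ∀ n : ℕ, 1 ≤ n → ∃ β : ℝ, 0 < β ∧
      ∀ x ∈ J, ∀ A : Set (EuclideanSpace ℝ (Fin d)), MeasurableSet A →
        A ⊆ J ∩ ball x (δ * (n + 1) / 2) →
        ENNReal.ofReal β * volume A ≤ iterK P n x A := by
  intro n hn
  obtain ⟨k, rfl⟩ := Nat.exists_eq_add_of_le' hn
  set I : Fin d → Set ℝ := fun i => (↑) ⁻¹' Ioo (a i) (b i)
  have hI : ∀ i, (I i).OrdConnected := fun i =>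
    ordConnected_Ioo.preimage_mono EReal.coe_strictMono.monotone
  have hI₂ : ∀ i, (I i).Nontrivial := fun i => by
    obtain ⟨p, hap, hpb⟩ := EReal.lt_iff_exists_real_btwn.1 (hab i)
    obtain ⟨q, hpq, hqb⟩ := EReal.lt_iff_exists_real_btwn.1 hpb
    exact ⟨p, ⟨hap, hpb⟩, q, ⟨hap.trans hpq, hqb⟩, (EReal.coe_lt_coe_iff.1 hpq).ne⟩
  obtain ⟨c, hc, hfat⟩ :=
    EuclideanSpace.exists_forall_ofReal_le_volume_inter_ball hI hI₂ (ρ := δ / 4) (by positivity)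
  change J = {x | ∀ i, x i ∈ I i} at hJ
  subst hJ
  have hradius : δ * ((k + 1 : ℕ) + 1 : ℝ) / 2 = δ * (k + 2) / 2 := by push_cast; ring
  refine ⟨ε * (ε * c) ^ k, by positivity, fun x hx A hA hAx => ?_⟩
  rw [ENNReal.ofReal_mul hε.le, ENNReal.ofReal_pow (by positivity), ENNReal.ofReal_mul hε.le]
  exact iterK_minorization_of_convex P (EuclideanSpace.convex_setOf_forall_apply_mem hI)
    (EuclideanSpace.measurableSet_setOf_forall_apply_mem hI) hδ.le hfat hmin k x hx A hA
    (by rwa [hradius] at hAx)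

/-- Lemma 16 (Plower): if P(x,dy) ≥ ε Leb(dy) whenever x,y ∈ J with |y−x| < δ, where
J ⊆ 𝒳 is a (possibly unbounded) rectangle, then for each n there is β_n > 0 with
Pⁿ(x,dy) ≥ β_n Leb(dy) whenever x,y ∈ J with |y−x| < δ(n+1)/2. -/
theorem iterate_minorization_on_rectangle
    (d : ℕ) (𝒳 : Set (EuclideanSpace ℝ (Fin d))) (hopen : IsOpen 𝒳)
    (P : Kernel (EuclideanSpace ℝ (Fin d)) (EuclideanSpace ℝ (Fin d))) [IsMarkovKernel P]
    -- the rectangle J, with extended-real endpoints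
    (a b : Fin d → EReal) (hab : ∀ i, a i < b i)
    (J : Set (EuclideanSpace ℝ (Fin d)))
    (hJ : J = {x | ∀ i, a i < (x i : EReal) ∧ (x i : EReal) < b i})
    (hJX : J ⊆ 𝒳)
    (δ ε : ℝ) (hδ : 0 < δ) (hε : 0 < ε)
    (hmin : ∀ x ∈ J, ∀ A : Set (EuclideanSpace ℝ (Fin d)), MeasurableSet A →
        A ⊆ J ∩ ball x δ → ENNReal.ofReal ε * volume A ≤ P x A) :
    ∀ n : ℕ, 1 ≤ n → ∃ β : ℝ, 0 < β ∧
      ∀ x ∈ J, ∀ A : Set (EuclideanSpace ℝ (Fin d)), MeasurableSet A →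
        A ⊆ J ∩ ball x (δ * (n + 1) / 2) →
        ENNReal.ofReal β * volume A ≤ iterK P n x A :=
  iterate_minorization_on_rectangle_general d P a b hab J hJ δ ε hδ hε hmin
end

section
/- Let P be a Markov transition kernel on a measurable space (𝒳, ℱ) that is reversible with respect to a probability measure π, and let C ∈ ℱ with π(C) > 0. Assume C is a small set for P: there are n₀ ∈ ℕ, β > 0 and a probability measure ν such that P^{n₀}(x, A) ≥ β·1_C(x)·ν(A) for all x ∈ 𝒳 and A ∈ ℱ. Then P^{2n₀}(x, A) ≥ (1/4) β² · 1_C(x) · π(A ∩ C) for all x ∈ 𝒳 and A ∈ ℱ. In particular, C is a (2n₀)-small set with minorizing measure π restricted and normalized to C. -/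
open MeasureTheory ProbabilityTheory Filter Metric Set
open scoped ENNReal Topology

/-! For `x ∈ C`, Chapman–Kolmogorov and the minorization give
`P^{2n₀}(x, A) ≥ β ∫ P^{n₀}(y, A ∩ C) ν(dy)`. Let `E` be the set of `y` with
`P^{n₀}(y, A ∩ C) < (β/2) π(A ∩ C)`. By the minorization, the `π`-flow of `P^{n₀}` from `A ∩ C`
into `E` is at least `β ν(E) π(A ∩ C)`, and by reversibility it equals the flow from `E` into
`A ∩ C`, which is at most `(β/2) π(A ∩ C)`. So `ν(E) ≤ 1/2`, whence
`∫ P^{n₀}(y, A ∩ C) ν(dy) ≥ (β/4) π(A ∩ C)`.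

Reversibility of `P^{n₀}` follows by writing reversibility as self-adjointness with respect to
`π` on nonnegative measurable functions, a property inherited by products of commuting kernels. -/

lemma iterK_eq_pow {X : Type*} [MeasurableSpace X] (P : Kernel X X) (n : ℕ) :
    iterK P n = P ^ n := by
  induction n with
  | zero => rfl
  | succ n ih => rw [pow_succ', ← ih]; rfl

namespace ProbabilityTheory.Kernel

variable {X : Type*} [MeasurableSpace X] {κ η : Kernel X X} {π ν : Measure X}

instance IsFiniteKernel.pow (κ : Kernel X X) [IsFiniteKernel κ] (n : ℕ) :
    IsFiniteKernel (κ ^ n) := by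
  induction n with
  | zero => rw [pow_zero]; exact inferInstanceAs (IsFiniteKernel Kernel.id)
  | succ n ih => rw [pow_succ]; exact IsFiniteKernel.comp _ _

instance IsMarkovKernel.pow (κ : Kernel X X) [IsMarkovKernel κ] (n : ℕ) :
    IsMarkovKernel (κ ^ n) := by
  induction n with
  | zero => rw [pow_zero]; exact inferInstanceAs (IsMarkovKernel Kernel.id)
  | succ n ih => rw [pow_succ]; exact IsMarkovKernel.comp _ _

lemma isReversible_id : IsReversible Kernel.id π := by
  intro A B hA hB
  simp only [id_apply, Measure.dirac_apply' _ hB, Measure.dirac_apply' _ hA,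
    lintegral_indicator_one hB, lintegral_indicator_one hA, Measure.restrict_apply hB,
    Measure.restrict_apply hA, inter_comm]

lemma IsReversible.map_swap_compProd [IsFiniteMeasure π] [IsFiniteKernel κ]
    (hκ : IsReversible κ π) : (π ⊗ₘ κ).map Prod.swap = π ⊗ₘ κ := by
  refine ext_of_generate_finite _ generateFrom_prod.symm isPiSystem_prod ?_ ?_
  · rintro _ ⟨A, hA, B, hB, rfl⟩
    rw [Measure.map_apply measurable_swap (hA.prod hB), preimage_swap_prod,
      Measure.compProd_apply_prod hB hA, Measure.compProd_apply_prod hA hB, hκ hA hB]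
  · rw [Measure.map_apply measurable_swap MeasurableSet.univ, preimage_univ]

lemma IsReversible.lintegral_mul_lintegral_symm [IsFiniteMeasure π] [IsFiniteKernel κ]
    (hκ : IsReversible κ π) {f g : X → ℝ≥0∞} (hf : Measurable f) (hg : Measurable g) :
    ∫⁻ x, f x * ∫⁻ y, g y ∂(κ x) ∂π = ∫⁻ x, (∫⁻ y, f y ∂(κ x)) * g x ∂π := by
  have hfg : Measurable fun p : X × X => f p.1 * g p.2 :=
    (hf.comp measurable_fst).mul (hg.comp measurable_snd)
  have hgf : Measurable fun p : X × X => f p.2 * g p.1 :=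
    (hf.comp measurable_snd).mul (hg.comp measurable_fst)
  calc ∫⁻ x, f x * ∫⁻ y, g y ∂(κ x) ∂π = ∫⁻ p, f p.1 * g p.2 ∂(π ⊗ₘ κ) := by
        simp_rw [Measure.lintegral_compProd hfg, lintegral_const_mul _ hg]
    _ = ∫⁻ p, f p.2 * g p.1 ∂(π ⊗ₘ κ) := by
        conv_lhs => rw [← hκ.map_swap_compProd]
        rw [MeasureTheory.lintegral_map hfg measurable_swap]
        rfl
    _ = ∫⁻ x, (∫⁻ y, f y ∂(κ x)) * g x ∂π := by
        simp_rw [Measure.lintegral_compProd hgf, lintegral_mul_const _ hf]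

lemma isReversible_of_lintegral_mul_lintegral_symm
    (h : ∀ f g : X → ℝ≥0∞, Measurable f → Measurable g →
      ∫⁻ x, f x * ∫⁻ y, g y ∂(κ x) ∂π = ∫⁻ x, (∫⁻ y, f y ∂(κ x)) * g x ∂π) :
    IsReversible κ π := by
  intro A B hA hB
  have hAB := h (A.indicator 1) (B.indicator 1) (measurable_one.indicator hA)
    (measurable_one.indicator hB)
  simp only [lintegral_indicator_one hA, lintegral_indicator_one hB] at hAB
  rw [← lintegral_indicator hA, ← lintegral_indicator hB]
  convert hAB using 3 <;> simp only [indicator, Pi.one_apply] <;> split_ifs <;> simp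

lemma IsReversible.comp [IsFiniteMeasure π] [IsFiniteKernel κ] [IsFiniteKernel η]
    (hκ : IsReversible κ π) (hη : IsReversible η π) (hcomm : η ∘ₖ κ = κ ∘ₖ η) :
    IsReversible (η ∘ₖ κ) π := by
  refine isReversible_of_lintegral_mul_lintegral_symm fun f g hf hg => ?_
  calc ∫⁻ x, f x * ∫⁻ y, g y ∂((η ∘ₖ κ) x) ∂π
      = ∫⁻ x, f x * ∫⁻ z, (∫⁻ y, g y ∂(η z)) ∂(κ x) ∂π := by
        simp_rw [lintegral_comp _ _ _ hg]
    _ = ∫⁻ x, (∫⁻ y, f y ∂(κ x)) * ∫⁻ y, g y ∂(η x) ∂π :=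
        hκ.lintegral_mul_lintegral_symm hf hg.lintegral_kernel
    _ = ∫⁻ x, (∫⁻ z, (∫⁻ y, f y ∂(κ z)) ∂(η x)) * g x ∂π :=
        hη.lintegral_mul_lintegral_symm hf.lintegral_kernel hg
    _ = ∫⁻ x, (∫⁻ y, f y ∂((η ∘ₖ κ) x)) * g x ∂π := by
        simp_rw [hcomm, lintegral_comp _ _ _ hf]

lemma IsReversible.pow [IsFiniteMeasure π] [IsFiniteKernel κ] (hκ : IsReversible κ π)
    (n : ℕ) : IsReversible (κ ^ n) π := by
  induction n with
  | zero => exact isReversible_id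
  | succ n ih => rw [pow_succ]; exact hκ.comp ih (Commute.self_pow κ n).eq.symm

variable {C A : Set X} {β : ℝ≥0∞}

lemma IsReversible.measure_setOf_lt_le_half [IsProbabilityMeasure π] (hκ : IsReversible κ π)
    (hmin : ∀ x ∈ C, β • ν ≤ κ x) (hβ₀ : β ≠ 0) (hβ : β ≠ ∞) (hA : MeasurableSet A)
    (hAC : A ⊆ C) (hπA : π A ≠ 0) :
    ν {y | κ y A < β / 2 * π A} ≤ 2⁻¹ := by
  set E := {y | κ y A < β / 2 * π A}
  have hE : MeasurableSet E := measurableSet_lt (κ.measurable_coe hA) measurable_const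
  have : β * ν E * π A ≤ β * 2⁻¹ * π A := calc
    β * ν E * π A = ∫⁻ _ in A, β * ν E ∂π := (MeasureTheory.setLIntegral_const _ _).symm
    _ ≤ ∫⁻ z in A, κ z E ∂π := setLIntegral_mono' hA fun z hz => hmin z (hAC hz) E
    _ = ∫⁻ y in E, κ y A ∂π := hκ hA hE
    _ ≤ ∫⁻ _ in E, β / 2 * π A ∂π := setLIntegral_mono' hE fun y hy => le_of_lt hy
    _ = β / 2 * π A * π E := MeasureTheory.setLIntegral_const _ _
    _ ≤ β / 2 * π A := mul_le_of_le_one_right' prob_le_one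
    _ = β * 2⁻¹ * π A := by rw [div_eq_mul_inv]
  rwa [ENNReal.mul_le_mul_iff_left hπA (measure_ne_top π A),
    ENNReal.mul_le_mul_iff_right hβ₀ hβ] at this

lemma IsReversible.div_four_mul_le_lintegral [IsProbabilityMeasure π] [IsProbabilityMeasure ν]
    (hκ : IsReversible κ π) (hmin : ∀ x ∈ C, β • ν ≤ κ x) (hβ : β ≠ ∞)
    (hA : MeasurableSet A) (hAC : A ⊆ C) :
    β / 4 * π A ≤ ∫⁻ y, κ y A ∂ν := by
  rcases eq_or_ne β 0 with rfl | hβ₀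
  · simp
  rcases eq_or_ne (π A) 0 with hπA | hπA
  · simp [hπA]
  set E := {y | β / 2 * π A ≤ κ y A}
  have hE : MeasurableSet E := measurableSet_le measurable_const (κ.measurable_coe hA)
  have hνE : 2⁻¹ ≤ ν E := by
    have hνEc : ν Eᶜ ≤ 2⁻¹ := by
      simpa only [E, compl_ofPred, not_le] using
        hκ.measure_setOf_lt_le_half hmin hβ₀ hβ hA hAC hπA
    have : 2⁻¹ + 2⁻¹ ≤ ν E + 2⁻¹ := calc
      2⁻¹ + 2⁻¹ = ν E + ν Eᶜ := by
        rw [ENNReal.inv_two_add_inv_two, measure_add_measure_compl hE, measure_univ]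
      _ ≤ ν E + 2⁻¹ := by gcongr
    exact (ENNReal.add_le_add_iff_right (by simp)).mp this
  calc β / 4 * π A = β / 2 * π A * 2⁻¹ := by
        rw [div_eq_mul_inv, div_eq_mul_inv, show (4 : ℝ≥0∞) = 2 ^ 2 by norm_num, ENNReal.inv_pow]
        ring
    _ ≤ β / 2 * π A * ν E := by gcongr
    _ = ∫⁻ _ in E, β / 2 * π A ∂ν := (MeasureTheory.setLIntegral_const _ _).symm
    _ ≤ ∫⁻ y in E, κ y A ∂ν := setLIntegral_mono' hE fun y hy => hy
    _ ≤ ∫⁻ y, κ y A ∂ν := setLIntegral_le_lintegral _ _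

lemma IsReversible.minorization_comp_self [IsMarkovKernel κ] [IsProbabilityMeasure π]
    [IsProbabilityMeasure ν] (hκ : IsReversible κ π) (hmin : ∀ x ∈ C, β • ν ≤ κ x)
    (hC : MeasurableSet C) {x : X} (hx : x ∈ C) (hA : MeasurableSet A) :
    β ^ 2 / 4 * π (A ∩ C) ≤ (κ ∘ₖ κ) x A := by
  have hβ : β ≠ ∞ := by
    refine ne_top_of_le_ne_top ENNReal.one_ne_top ?_
    simpa using hmin x hx univ
  calc β ^ 2 / 4 * π (A ∩ C) = β * (β / 4 * π (A ∩ C)) := by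
        rw [pow_two, mul_div_assoc, mul_assoc]
    _ ≤ β * ∫⁻ y, κ y (A ∩ C) ∂ν := by
        gcongr
        exact hκ.div_four_mul_le_lintegral hmin hβ (hA.inter hC) inter_subset_right
    _ = ∫⁻ y, κ y (A ∩ C) ∂(β • ν) := by rw [lintegral_smul_measure, smul_eq_mul]
    _ ≤ ∫⁻ y, κ y (A ∩ C) ∂(κ x) := lintegral_mono' (hmin x hx) le_rfl
    _ ≤ ∫⁻ y, κ y A ∂(κ x) := lintegral_mono fun y => measure_mono inter_subset_left
    _ = (κ ∘ₖ κ) x A := (comp_apply' _ _ _ hA).symm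

end ProbabilityTheory.Kernel

theorem reversible_small_set_pi_minorization_general
    {𝒳 : Type*} [MeasurableSpace 𝒳]
    (P : Kernel 𝒳 𝒳) [IsMarkovKernel P] (π : Measure 𝒳) [IsProbabilityMeasure π]
    -- P is reversible with respect to π
    (hrev : ∀ A B : Set 𝒳, MeasurableSet A → MeasurableSet B →
        ∫⁻ x in A, P x B ∂π = ∫⁻ x in B, P x A ∂π)
    (C : Set 𝒳) (hC : MeasurableSet C) (hπC : 0 < π C)
    (n₀ : ℕ) (β : ℝ≥0∞) (hβ : 0 < β)
    (ν : Measure 𝒳) [IsProbabilityMeasure ν]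
    (hsmall : ∀ (x : 𝒳) (A : Set 𝒳), MeasurableSet A →
        β * C.indicator (fun _ => (1 : ℝ≥0∞)) x * ν A ≤ iterK P n₀ x A) :
    (∀ (x : 𝒳) (A : Set 𝒳), MeasurableSet A →
        β ^ 2 / 4 * C.indicator (fun _ => (1 : ℝ≥0∞)) x * π (A ∩ C) ≤
          iterK P (2 * n₀) x A) ∧
      ∃ β' : ℝ≥0∞, 0 < β' ∧ ∀ x ∈ C, ∀ A : Set 𝒳, MeasurableSet A →
        β' * ((π C)⁻¹ * π (A ∩ C)) ≤ iterK P (2 * n₀) x A := by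
  have hrev_pow : Kernel.IsReversible (P ^ n₀) π :=
    Kernel.IsReversible.pow (fun A B => hrev A B) n₀
  have hmin : ∀ x ∈ C, β • ν ≤ (P ^ n₀) x := fun x hx => Measure.le_iff.2 fun A hA => by
    simpa [indicator_of_mem hx, iterK_eq_pow] using hsmall x A hA
  have key : ∀ x ∈ C, ∀ A, MeasurableSet A → β ^ 2 / 4 * π (A ∩ C) ≤ iterK P (2 * n₀) x A :=
    fun x hx A hA => by
      rw [iterK_eq_pow, two_mul, pow_add]
      exact hrev_pow.minorization_comp_self hmin hC hx hA
  have hβ' : 0 < β ^ 2 / 4 * π C :=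
    ENNReal.mul_pos (ENNReal.div_pos (pow_ne_zero 2 hβ.ne') (by norm_num)).ne' hπC.ne'
  refine ⟨fun x A hA => ?_, β ^ 2 / 4 * π C, hβ', fun x hx A hA => ?_⟩
  · by_cases hx : x ∈ C
    · simpa [indicator_of_mem hx] using key x hx A hA
    · simp [indicator_of_notMem hx]
  · rw [mul_assoc, ← mul_assoc (π C), ENNReal.mul_inv_cancel hπC.ne' (measure_ne_top π C),
      one_mul]
    exact key x hx A hA

/-- Lemma 23 (BM_lemma, reversible case): if P is reversible with respect to π and C is a
small set via P^{n₀}(x,·) ≥ β 1_C(x) ν(·), then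
P^{2n₀}(x,A) ≥ (1/4) β² 1_C(x) π(A ∩ C); in particular C is a (2n₀)-small set with
minorizing measure π restricted and normalized to C. -/
theorem reversible_small_set_pi_minorization
    {𝒳 : Type*} [MeasurableSpace 𝒳]
    (P : Kernel 𝒳 𝒳) [IsMarkovKernel P] (π : Measure 𝒳) [IsProbabilityMeasure π]
    -- P is reversible with respect to π
    (hrev : ∀ A B : Set 𝒳, MeasurableSet A → MeasurableSet B →
        ∫⁻ x in A, P x B ∂π = ∫⁻ x in B, P x A ∂π)
    (C : Set 𝒳) (hC : MeasurableSet C) (hπC : 0 < π C)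
    (n₀ : ℕ) (hn₀ : 1 ≤ n₀) (β : ℝ≥0∞) (hβ : 0 < β)
    (ν : Measure 𝒳) [IsProbabilityMeasure ν]
    (hsmall : ∀ (x : 𝒳) (A : Set 𝒳), MeasurableSet A →
        β * C.indicator (fun _ => (1 : ℝ≥0∞)) x * ν A ≤ iterK P n₀ x A) :
    (∀ (x : 𝒳) (A : Set 𝒳), MeasurableSet A →
        β ^ 2 / 4 * C.indicator (fun _ => (1 : ℝ≥0∞)) x * π (A ∩ C) ≤
          iterK P (2 * n₀) x A) ∧
      ∃ β' : ℝ≥0∞, 0 < β' ∧ ∀ x ∈ C, ∀ A : Set 𝒳, MeasurableSet A →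
        β' * ((π C)⁻¹ * π (A ∩ C)) ≤ iterK P (2 * n₀) x A :=
  reversible_small_set_pi_minorization_general P π hrev C hC hπC n₀ β hβ ν hsmall
end
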